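/- arXiv:2406.02758 — 4 statements merged into one kernel-verified Lean document; each statement's English description precedes it below -/
import Mathlib

section
/- Let a ≥ 0 and let f : B → X be holomorphic with f(0) = 0; set A = f'(0) (the Fréchet derivative at 0). The following are equivalent: (i) Re⟨f(x), x*⟩ ≥ a‖x‖² for all x ∈ B and all x* ∈ J(x) (i.e., f ∈ N_a); (ii) for every x ∈ B and every x* ∈ J(x), |⟨f(x), x*⟩ − c(x)| ≤ r(x), where c(x) = (⟨Ax, x*⟩ + ‖x‖²·conj(⟨Ax, x*⟩) − 2a‖x‖⁴)/(1 − ‖x‖²) and r(x) = (2‖x‖/(1 − ‖x‖²))·(Re⟨Ax, x*⟩ − a‖x‖²); (iii) for every x ∈ B and every x* ∈ J(x), Re⟨Ax, x*⟩·(1 − ‖x‖)/(1 + ‖x‖) + 2a‖x‖³/(1 + ‖x‖) ≤ Re⟨f(x), x*⟩. -/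
/-!
Fix a unit vector `u` and `ψ ∈ J(u)`. Then `conj ζ • ψ ∈ J(ζ u)`, and every pair `(x, x*)` with
`x ≠ 0` arises in this way with `ζ = ‖x‖`. Along the complex line through `u` everything is
governed by the holomorphic function `p(ζ) = ψ(f(ζ u)) / ζ` on the unit disc, with `p(0) = ψ(Au)`:
`⟨f(ζu), conj ζ ψ⟩ = |ζ|² p(ζ)` and `⟨A(ζu), conj ζ ψ⟩ = |ζ|² p(0)`.

Condition (i) says `Re p ≥ a`. The Schwarz lemma applied to the Cayley transform
`(p - p(0)) / (p + conj p(0) - 2a)` gives `|p(s) - p(0)| ≤ s |p(s) + conj p(0) - 2a|`, and this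
Apollonius-type inequality describes exactly the disc of (ii). Taking real parts on that disc gives
(iii), and also (i) back because the radius must be nonnegative. Finally (iii) on the circle
`|ζ| = 1/2` together with the mean value property of `Re p` forces `Re p(0) ≥ a`, which turns
(iii) into (i).
-/

open Complex Metric

/-- The set `J(x)` of support functionals at `x`:
`{x* ∈ X* : ⟨x, x*⟩ = ‖x‖² = ‖x*‖²}`. -/
def suppFun {X : Type*} [NormedAddCommGroup X] [NormedSpace ℂ X] (x : X) :
    Set (X →L[ℂ] ℂ) :=
  {φ | φ x = (‖x‖ : ℂ) ^ 2 ∧ ‖φ‖ = ‖x‖}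

/-- The class `N_a`: holomorphic mappings `f` of the open unit ball with `f(0)=0` and
`Re⟨f(x), x*⟩ ≥ a‖x‖²` for all `x ∈ B`, `x* ∈ J(x)`. -/
def IsNa {X : Type*} [NormedAddCommGroup X] [NormedSpace ℂ X] (a : ℝ) (f : X → X) : Prop :=
  DifferentiableOn ℂ f (ball 0 1) ∧ f 0 = 0 ∧
    ∀ x ∈ ball (0 : X) 1, ∀ φ ∈ suppFun x, a * ‖x‖ ^ 2 ≤ (φ (f x)).re

/-- `K_A(θ) = sup { Re (e^{-iθ} w) : w ∈ V(A) }`, the support function of the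
numerical range `V(A) = {⟨Ax, x*⟩ : ‖x‖ = 1, x* ∈ J(x)}`. -/
noncomputable def KA {X : Type*} [NormedAddCommGroup X] [NormedSpace ℂ X]
    (A : X →L[ℂ] X) (θ : ℝ) : ℝ :=
  sSup {s : ℝ | ∃ x : X, ‖x‖ = 1 ∧ ∃ φ ∈ suppFun x,
    s = (Complex.exp (-(θ : ℂ) * Complex.I) * φ (A x)).re}

theorem norm_sub_lt_norm_add_conj_sub {v w : ℂ} {b : ℝ} (hv : b < v.re) (hw : b < w.re) :
    ‖w - v‖ < ‖w + (starRingEnd ℂ) v - 2 * b‖ := by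
  refine lt_of_pow_lt_pow_left₀ 2 (norm_nonneg _) ?_
  simp only [Complex.sq_norm, Complex.normSq_apply, sub_re, sub_im, add_re, add_im, conj_re,
    conj_im, mul_re, mul_im, ofReal_re, ofReal_im, re_ofNat, im_ofNat]
  nlinarith [mul_pos (sub_pos.2 hv) (sub_pos.2 hw)]

theorem norm_sub_le_mul_norm_of_lt_re {p : ℂ → ℂ} {b : ℝ} (hp : DifferentiableOn ℂ p (ball 0 1))
    (hb : ∀ z ∈ ball (0 : ℂ) 1, b < (p z).re) {z : ℂ} (hz : z ∈ ball (0 : ℂ) 1) :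
    ‖p z - p 0‖ ≤ ‖z‖ * ‖p z + (starRingEnd ℂ) (p 0) - 2 * b‖ := by
  have hb0 := hb 0 (mem_ball_self one_pos)
  have hlt : ∀ ζ ∈ ball (0 : ℂ) 1, ‖p ζ - p 0‖ < ‖p ζ + (starRingEnd ℂ) (p 0) - 2 * b‖ :=
    fun ζ hζ ↦ norm_sub_lt_norm_add_conj_sub hb0 (hb ζ hζ)
  have hne : ∀ ζ ∈ ball (0 : ℂ) 1, p ζ + (starRingEnd ℂ) (p 0) - 2 * b ≠ 0 :=
    fun ζ hζ ↦ norm_pos_iff.1 ((norm_nonneg _).trans_lt (hlt ζ hζ))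
  have hmaps : Set.MapsTo (fun ζ ↦ (p ζ - p 0) / (p ζ + (starRingEnd ℂ) (p 0) - 2 * b))
      (ball 0 1) (closedBall 0 1) := fun ζ hζ ↦ by
    rw [mem_closedBall_zero_iff, norm_div]
    exact div_le_one_of_le₀ (hlt ζ hζ).le (norm_nonneg _)
  have := Complex.norm_le_norm_of_mapsTo_ball
    ((hp.sub_const _).div ((hp.add_const _).sub_const _) hne) hmaps (by simp)
    (mem_ball_zero_iff.1 hz)
  rwa [Pi.div_apply, norm_div, div_le_iff₀ (norm_pos_iff.2 (hne z hz))] at this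

theorem norm_sub_le_mul_norm_of_le_re {p : ℂ → ℂ} {b : ℝ} (hp : DifferentiableOn ℂ p (ball 0 1))
    (hb : ∀ z ∈ ball (0 : ℂ) 1, b ≤ (p z).re) {z : ℂ} (hz : z ∈ ball (0 : ℂ) 1) :
    ‖p z - p 0‖ ≤ ‖z‖ * ‖p z + (starRingEnd ℂ) (p 0) - 2 * b‖ := by
  have hz1 : ‖z‖ ≤ 1 := (mem_ball_zero_iff.1 hz).le
  refine le_of_forall_pos_le_add fun ε hε ↦ ?_
  have hε' := norm_sub_le_mul_norm_of_lt_re hp (b := b - ε / 2)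
    (fun ζ hζ ↦ by linarith [hb ζ hζ]) hz
  calc ‖p z - p 0‖ ≤ ‖z‖ * ‖(p z + (starRingEnd ℂ) (p 0) - 2 * b) + ε‖ := by
        convert hε' using 3; push_cast; ring
    _ ≤ ‖z‖ * (‖p z + (starRingEnd ℂ) (p 0) - 2 * b‖ + ε) := by
        gcongr; exact (norm_add_le _ _).trans_eq (by simp [hε.le])
    _ ≤ ‖z‖ * ‖p z + (starRingEnd ℂ) (p 0) - 2 * b‖ + ε := by nlinarith [norm_nonneg z]

theorem DiffContOnCl.le_re_of_le_re_sphere {p : ℂ → ℂ} {c : ℂ} {R m : ℝ} (hR : 0 < R)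
    (hp : DiffContOnCl ℂ p (ball c R)) (hm : ∀ z ∈ sphere c R, m ≤ (p z).re) :
    m ≤ (p c).re := by
  rw [← abs_of_pos hR] at hp hm
  have hcont : ContinuousOn p (sphere c |R|) := hp.continuousOn.mono <| by
    rw [closure_ball _ (abs_pos.2 hR.ne').ne']; exact sphere_subset_closedBall
  have hint : CircleIntegrable p c R := hcont.circleIntegrable'
  calc m = Real.circleAverage (fun _ ↦ m) c R := (Real.circleAverage_const m c R).symm
    _ ≤ Real.circleAverage (reCLM ∘ p) c R :=
        Real.circleAverage_mono (circleIntegrable_const m c R)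
          (continuous_re.comp_continuousOn hcont).circleIntegrable' hm
    _ = (p c).re := by
        rw [reCLM.circleAverage_comp_comm hint, hp.circleAverage]; rfl

-- `c(x)` and `r(x)` of (ii) are `discCenter a ‖x‖ ⟨Ax, x*⟩` and `discRadius a ‖x‖ ⟨Ax, x*⟩`;
-- the left side of (iii) is `reLowerBound a ‖x‖ ⟨Ax, x*⟩`.
noncomputable def discCenter (a s : ℝ) (v : ℂ) : ℂ :=
  (v + (s : ℂ) ^ 2 * (starRingEnd ℂ) v - ((2 * a * s ^ 4 : ℝ) : ℂ)) / (1 - (s : ℂ) ^ 2)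

noncomputable def discRadius (a s : ℝ) (v : ℂ) : ℝ := 2 * s / (1 - s ^ 2) * (v.re - a * s ^ 2)

noncomputable def reLowerBound (a s : ℝ) (v : ℂ) : ℝ :=
  v.re * ((1 - s) / (1 + s)) + 2 * a * s ^ 3 / (1 + s)

theorem norm_sub_discCenter_le {a s : ℝ} {v w : ℂ} (hs0 : 0 ≤ s) (hs1 : s < 1)
    (hv : a * s ^ 2 ≤ v.re) (h : ‖w - v‖ ≤ s * ‖w + (starRingEnd ℂ) v - 2 * (a * s ^ 2 : ℝ)‖) :
    ‖w - discCenter a s v‖ ≤ discRadius a s v := by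
  have hd : 0 < 1 - s ^ 2 := by nlinarith
  have hw : w - discCenter a s v = (((1 - s ^ 2 : ℝ) : ℂ) * w -
      (v + ((s ^ 2 : ℝ) : ℂ) * (starRingEnd ℂ) v - ((2 * a * s ^ 4 : ℝ) : ℂ))) /
      ((1 - s ^ 2 : ℝ) : ℂ) := by
    have : ((1 - s ^ 2 : ℝ) : ℂ) ≠ 0 := ofReal_ne_zero.2 hd.ne'
    rw [discCenter, eq_div_iff this]; push_cast at this ⊢; field_simp
  rw [hw, norm_div, norm_real, Real.norm_of_nonneg hd.le, div_le_iff₀ hd, discRadius,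
    div_mul_eq_mul_div, div_mul_cancel₀ _ hd.ne']
  refine le_of_pow_le_pow_left₀ two_ne_zero (by nlinarith) ?_
  have h2 := pow_le_pow_left₀ (norm_nonneg _) h 2
  -- Apollonius' identity: with `q = 2 a s² - conj v`, so that `v - q = 2 (Re v - a s²)`,
  -- `‖(1 - s²) w - (v - s² q)‖² = s² ‖v - q‖² + (1 - s²) (‖w - v‖² - s² ‖w - q‖²)`
  simp only [mul_pow, Complex.sq_norm, Complex.normSq_apply, sub_re, sub_im, add_re, add_im,
    mul_re, mul_im, conj_re, conj_im, ofReal_re, ofReal_im, re_ofNat, im_ofNat] at h2 ⊢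
  nlinarith [mul_nonneg hd.le (sub_nonneg.2 h2)]

theorem reLowerBound_le_re_of_norm_sub_discCenter_le {a s : ℝ} {v w : ℂ} (hs0 : 0 ≤ s)
    (hs1 : s < 1) (h : ‖w - discCenter a s v‖ ≤ discRadius a s v) : reLowerBound a s v ≤ w.re := by
  have hd : 0 < 1 - s ^ 2 := by nlinarith
  have hre : (discCenter a s v).re = (v.re * (1 + s ^ 2) - 2 * a * s ^ 4) / (1 - s ^ 2) := by
    rw [discCenter, show 1 - (s : ℂ) ^ 2 = ((1 - s ^ 2 : ℝ) : ℂ) by push_cast; rfl,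
      div_ofReal_re]
    simp only [sub_re, add_re, mul_re, conj_re, conj_im, ofReal_re, ofReal_im, ← ofReal_pow]
    ring
  have hlow : (discCenter a s v).re - discRadius a s v = reLowerBound a s v := by
    rw [hre, discRadius, reLowerBound]; field_simp; ring
  have := (abs_le.1 ((abs_re_le_norm _).trans h)).1
  rw [sub_re] at this
  linarith

theorem reLowerBound_sub_mul_sq (a : ℝ) {s : ℝ} (hs : 1 + s ≠ 0) (v : ℂ) :
    reLowerBound a s v - a * s ^ 2 = (1 - s) / (1 + s) * (v.re - a * s ^ 2) := by
  rw [reLowerBound]; field_simp; ring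

theorem mul_sq_le_reLowerBound_iff {a s : ℝ} {v : ℂ} (hs0 : 0 ≤ s) (hs1 : s < 1) :
    a * s ^ 2 ≤ reLowerBound a s v ↔ a * s ^ 2 ≤ v.re := by
  have hpos : 0 < (1 - s) / (1 + s) := by apply div_pos <;> linarith
  rw [← sub_nonneg, reLowerBound_sub_mul_sq a (by linarith) v, mul_nonneg_iff_of_pos_left hpos,
    sub_nonneg]

theorem mul_sq_le_re_of_norm_sub_discCenter_le {a s : ℝ} {v w : ℂ} (hs0 : 0 < s)
    (hs1 : s < 1) (h : ‖w - discCenter a s v‖ ≤ discRadius a s v) : a * s ^ 2 ≤ w.re := by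
  have hv : a * s ^ 2 ≤ v.re := by
    have hr := (norm_nonneg _).trans h
    rw [discRadius] at hr
    have : 0 < 2 * s / (1 - s ^ 2) := by apply div_pos <;> nlinarith
    linarith [nonneg_of_mul_nonneg_right hr this]
  exact ((mul_sq_le_reLowerBound_iff hs0.le hs1).2 hv).trans
    (reLowerBound_le_re_of_norm_sub_discCenter_le hs0.le hs1 h)

theorem norm_sq_mul_sub_discCenter_le {p : ℂ → ℂ} {a s : ℝ}
    (hp : DifferentiableOn ℂ p (ball 0 1)) (hre : ∀ z ∈ ball (0 : ℂ) 1, a ≤ (p z).re)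
    (hs0 : 0 ≤ s) (hs1 : s < 1) :
    ‖((s ^ 2 : ℝ) : ℂ) * p s - discCenter a s (((s ^ 2 : ℝ) : ℂ) * p 0)‖ ≤
      discRadius a s (((s ^ 2 : ℝ) : ℂ) * p 0) := by
  have hs : (s : ℂ) ∈ ball (0 : ℂ) 1 := by simpa [abs_of_nonneg hs0] using hs1
  have hschwarz := norm_sub_le_mul_norm_of_le_re hp hre hs
  rw [norm_real, Real.norm_of_nonneg hs0] at hschwarz
  have hsq : ‖((s ^ 2 : ℝ) : ℂ)‖ = s ^ 2 := by rw [norm_real, Real.norm_of_nonneg (sq_nonneg s)]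
  refine norm_sub_discCenter_le hs0 hs1 ?_ ?_
  · rw [re_ofReal_mul, mul_comm a]
    exact mul_le_mul_of_nonneg_left (hre 0 (mem_ball_self one_pos)) (sq_nonneg s)
  · calc ‖((s ^ 2 : ℝ) : ℂ) * p s - ((s ^ 2 : ℝ) : ℂ) * p 0‖ = s ^ 2 * ‖p s - p 0‖ := by
          rw [← mul_sub, norm_mul, hsq]
      _ ≤ s ^ 2 * (s * ‖p s + (starRingEnd ℂ) (p 0) - 2 * a‖) := by gcongr
      _ = s * ‖((s ^ 2 : ℝ) : ℂ) * p s + (starRingEnd ℂ) (((s ^ 2 : ℝ) : ℂ) * p 0) -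
            2 * ((a * s ^ 2 : ℝ) : ℂ)‖ := by
          rw [map_mul, conj_ofReal, show ((s ^ 2 : ℝ) : ℂ) * p s +
            ((s ^ 2 : ℝ) : ℂ) * (starRingEnd ℂ) (p 0) - 2 * ((a * s ^ 2 : ℝ) : ℂ) =
            ((s ^ 2 : ℝ) : ℂ) * (p s + (starRingEnd ℂ) (p 0) - 2 * a) by push_cast; ring,
            norm_mul, hsq]
          ring

section

variable {X : Type*} [NormedAddCommGroup X] [NormedSpace ℂ X]

theorem conj_smul_mem_suppFun {x : X} {φ : X →L[ℂ] ℂ} (hφ : φ ∈ suppFun x) (ζ : ℂ) :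
    (starRingEnd ℂ) ζ • φ ∈ suppFun (ζ • x) := by
  obtain ⟨hφx, hφn⟩ := hφ
  refine ⟨?_, by rw [norm_smul, norm_smul, hφn, RCLike.norm_conj]⟩
  rw [smul_apply, map_smul, hφx, smul_eq_mul, smul_eq_mul, ← mul_assoc, mul_comm _ ζ, mul_conj,
    norm_smul, ofReal_mul, mul_pow, normSq_eq_norm_sq, ofReal_pow]

theorem exists_smul_eq_of_mem_suppFun {x : X} {φ : X →L[ℂ] ℂ} (hx : x ≠ 0) (hφ : φ ∈ suppFun x) :
    ∃ u ψ, ‖u‖ = 1 ∧ ψ ∈ suppFun u ∧ (‖x‖ : ℂ) • u = x ∧ (starRingEnd ℂ) (‖x‖ : ℂ) • ψ = φ := by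
  have hs : (‖x‖ : ℂ) ≠ 0 := ofReal_ne_zero.2 (norm_ne_zero_iff.2 hx)
  refine ⟨(‖x‖ : ℂ)⁻¹ • x, (starRingEnd ℂ) (‖x‖ : ℂ)⁻¹ • φ, ?_, conj_smul_mem_suppFun hφ _,
    smul_inv_smul₀ hs x, ?_⟩
  · rw [norm_smul, norm_inv, norm_real, norm_norm, inv_mul_cancel₀ (norm_ne_zero_iff.2 hx)]
  · rw [smul_smul, ← map_mul, mul_inv_cancel₀ hs, map_one, one_smul]

noncomputable def slice (f : X → X) (u : X) (ψ : X →L[ℂ] ℂ) : ℂ → ℂ :=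
  dslope (fun ζ : ℂ ↦ ψ (f (ζ • u))) 0

variable {f : X → X} {u : X} {ψ : X →L[ℂ] ℂ}

theorem differentiableOn_slice (hf : DifferentiableOn ℂ f (ball 0 1)) (hu : ‖u‖ ≤ 1) :
    DifferentiableOn ℂ (slice f u ψ) (ball 0 1) := by
  refine (differentiableOn_dslope (ball_mem_nhds 0 one_pos)).2 <|
    ψ.differentiable.comp_differentiableOn <|
      hf.comp (differentiable_id.smul_const u).differentiableOn fun ζ hζ ↦ ?_
  rw [mem_ball_zero_iff, norm_smul]
  exact (mul_le_of_le_one_right (norm_nonneg _) hu).trans_lt (mem_ball_zero_iff.1 hζ)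

theorem slice_zero {A : X →L[ℂ] X} (hA : HasFDerivAt f A 0) : slice f u ψ 0 = ψ (A u) := by
  rw [slice, dslope_same]
  have hline : HasDerivAt (fun ζ : ℂ ↦ ζ • u) u 0 := by
    simpa using (hasDerivAt_id (0 : ℂ)).smul_const u
  exact (ψ.hasFDerivAt.comp_hasDerivAt 0 ((zero_smul ℂ u ▸ hA).comp_hasDerivAt 0 hline)).deriv

theorem conj_smul_apply_eq_normSq_mul_slice (hf0 : f 0 = 0) (ζ : ℂ) :
    ((starRingEnd ℂ) ζ • ψ) (f (ζ • u)) = normSq ζ * slice f u ψ ζ := by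
  have h := sub_smul_dslope (fun ζ : ℂ ↦ ψ (f (ζ • u))) 0 ζ
  simp only [zero_smul, hf0, map_zero, sub_zero, smul_eq_mul] at h
  rw [smul_apply, smul_eq_mul, slice, ← mul_conj, mul_comm ζ, mul_assoc, h]

theorem conj_smul_apply_map_smul_eq {A : X →L[ℂ] X} (hA : HasFDerivAt f A 0) (ζ : ℂ) :
    ((starRingEnd ℂ) ζ • ψ) (A (ζ • u)) = normSq ζ * slice f u ψ 0 := by
  rw [smul_apply, map_smul, map_smul, smul_eq_mul, smul_eq_mul, ← mul_assoc, mul_comm _ ζ,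
    mul_conj, slice_zero hA]

theorem exists_slice_of_mem_suppFun {A : X →L[ℂ] X} (hf0 : f 0 = 0) (hA : HasFDerivAt f A 0)
    {x : X} {φ : X →L[ℂ] ℂ} (hx : x ≠ 0) (hφ : φ ∈ suppFun x) :
    ∃ u ψ, ‖u‖ = 1 ∧ ψ ∈ suppFun u ∧
      φ (f x) = ((‖x‖ ^ 2 : ℝ) : ℂ) * slice f u ψ ‖x‖ ∧
      φ (A x) = ((‖x‖ ^ 2 : ℝ) : ℂ) * slice f u ψ 0 := by
  obtain ⟨u, ψ, hu, hψ, hxu, hφψ⟩ := exists_smul_eq_of_mem_suppFun hx hφ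
  refine ⟨u, ψ, hu, hψ, ?_, ?_⟩
  · conv_lhs => rw [← hxu, ← hφψ]
    rw [conj_smul_apply_eq_normSq_mul_slice hf0, normSq_ofReal, sq]
  · conv_lhs => rw [← hxu, ← hφψ]
    rw [conj_smul_apply_map_smul_eq hA, normSq_ofReal, sq]

theorem smul_mem_ball_of_norm_eq_one (hu : ‖u‖ = 1) {ζ : ℂ} (hζ : ζ ∈ ball (0 : ℂ) 1) :
    ζ • u ∈ ball (0 : X) 1 := by
  rwa [mem_ball_zero_iff, norm_smul, hu, mul_one, ← mem_ball_zero_iff]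

theorem le_re_slice_of_forall_le_re {a : ℝ} (hf : DifferentiableOn ℂ f (ball 0 1))
    (hf0 : f 0 = 0) (hi : ∀ x ∈ ball (0 : X) 1, ∀ φ ∈ suppFun x, a * ‖x‖ ^ 2 ≤ (φ (f x)).re)
    (hu : ‖u‖ = 1) (hψ : ψ ∈ suppFun u) {ζ : ℂ} (hζ : ζ ∈ ball (0 : ℂ) 1) :
    a ≤ (slice f u ψ ζ).re := by
  have hne : ∀ ζ ∈ ball (0 : ℂ) 1, ζ ≠ 0 → a ≤ (slice f u ψ ζ).re := fun ζ hζ hζ0 ↦ by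
    have h := hi _ (smul_mem_ball_of_norm_eq_one hu hζ) _ (conj_smul_mem_suppFun hψ ζ)
    rw [conj_smul_apply_eq_normSq_mul_slice hf0, re_ofReal_mul, norm_smul, hu, mul_one,
      ← normSq_eq_norm_sq, mul_comm a] at h
    exact le_of_mul_le_mul_left h (normSq_pos.2 hζ0)
  rcases eq_or_ne ζ 0 with rfl | hζ0
  · refine ((differentiableOn_slice hf hu.le).diffContOnCl_ball
      (closedBall_subset_ball (by norm_num : (1 / 2 : ℝ) < 1))).le_re_of_le_re_sphere
      (by norm_num) fun z hz ↦ hne z (sphere_subset_ball (by norm_num) hz) ?_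
    rintro rfl
    norm_num at hz
  · exact hne ζ hζ hζ0

theorem le_re_slice_zero_of_forall_reLowerBound_le {a : ℝ} {A : X →L[ℂ] X}
    (hf : DifferentiableOn ℂ f (ball 0 1)) (hf0 : f 0 = 0) (hA : HasFDerivAt f A 0)
    (hiii : ∀ x ∈ ball (0 : X) 1, ∀ φ ∈ suppFun x, reLowerBound a ‖x‖ (φ (A x)) ≤ (φ (f x)).re)
    (hu : ‖u‖ = 1) (hψ : ψ ∈ suppFun u) :
    a ≤ (slice f u ψ 0).re := by
  have hsphere : ∀ ζ ∈ sphere (0 : ℂ) (1 / 2),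
      (slice f u ψ 0).re / 3 + 2 * a / 3 ≤ (slice f u ψ ζ).re := fun ζ hζ ↦ by
    rw [mem_sphere_zero_iff_norm] at hζ
    have h := hiii _ (smul_mem_ball_of_norm_eq_one hu (by rw [mem_ball_zero_iff, hζ]; norm_num))
      _ (conj_smul_mem_suppFun hψ ζ)
    rw [conj_smul_apply_eq_normSq_mul_slice hf0, conj_smul_apply_map_smul_eq hA, norm_smul, hu,
      mul_one, normSq_eq_norm_sq, hζ, reLowerBound, re_ofReal_mul, re_ofReal_mul] at h
    norm_num at h
    linarith
  have := ((differentiableOn_slice hf hu.le).diffContOnCl_ball (closedBall_subset_ball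
    (by norm_num : (1 / 2 : ℝ) < 1))).le_re_of_le_re_sphere (by norm_num) hsphere
  linarith

theorem norm_sub_discCenter_le_of_forall_le_re (a : ℝ) {A : X →L[ℂ] X}
    (hf : DifferentiableOn ℂ f (ball 0 1)) (hf0 : f 0 = 0) (hA : HasFDerivAt f A 0)
    (hi : ∀ x ∈ ball (0 : X) 1, ∀ φ ∈ suppFun x, a * ‖x‖ ^ 2 ≤ (φ (f x)).re) :
    ∀ x ∈ ball (0 : X) 1, ∀ φ ∈ suppFun x,
      ‖φ (f x) - discCenter a ‖x‖ (φ (A x))‖ ≤ discRadius a ‖x‖ (φ (A x)) := by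
  intro x hx φ hφ
  rcases eq_or_ne x 0 with rfl | hx0
  · simp [hf0, discCenter, discRadius]
  obtain ⟨u, ψ, hu, hψ, hfx, hAx⟩ := exists_slice_of_mem_suppFun hf0 hA hx0 hφ
  rw [hfx, hAx]
  exact norm_sq_mul_sub_discCenter_le (differentiableOn_slice hf hu.le)
    (fun _ ↦ le_re_slice_of_forall_le_re hf hf0 hi hu hψ) (norm_nonneg x) (mem_ball_zero_iff.1 hx)

theorem mul_sq_le_re_of_forall_reLowerBound_le (a : ℝ) {A : X →L[ℂ] X}
    (hf : DifferentiableOn ℂ f (ball 0 1)) (hf0 : f 0 = 0) (hA : HasFDerivAt f A 0)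
    (hiii : ∀ x ∈ ball (0 : X) 1, ∀ φ ∈ suppFun x, reLowerBound a ‖x‖ (φ (A x)) ≤ (φ (f x)).re) :
    ∀ x ∈ ball (0 : X) 1, ∀ φ ∈ suppFun x, a * ‖x‖ ^ 2 ≤ (φ (f x)).re := by
  intro x hx φ hφ
  rcases eq_or_ne x 0 with rfl | hx0
  · simp [hf0]
  obtain ⟨u, ψ, hu, hψ, -, hAx⟩ := exists_slice_of_mem_suppFun hf0 hA hx0 hφ
  refine le_trans ((mul_sq_le_reLowerBound_iff (norm_nonneg x) (mem_ball_zero_iff.1 hx)).2 ?_)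
    (hiii x hx φ hφ)
  rw [hAx, re_ofReal_mul, mul_comm a]
  exact mul_le_mul_of_nonneg_left
    (le_re_slice_zero_of_forall_reLowerBound_le hf hf0 hA hiii hu hψ) (sq_nonneg _)

end

theorem stmt_0_general {X : Type*} [NormedAddCommGroup X] [NormedSpace ℂ X]
    (a : ℝ) (f : X → X)
    (hf : DifferentiableOn ℂ f (ball 0 1)) (hf0 : f 0 = 0)
    (A : X →L[ℂ] X) (hA : A = fderiv ℂ f 0) :
    ((∀ x ∈ ball (0 : X) 1, ∀ φ ∈ suppFun x, a * ‖x‖ ^ 2 ≤ (φ (f x)).re) ↔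
      (∀ x ∈ ball (0 : X) 1, ∀ φ ∈ suppFun x,
        ‖(φ (f x) -
            (φ (A x) + (‖x‖ : ℂ) ^ 2 * (starRingEnd ℂ) (φ (A x)) -
              ((2 * a * ‖x‖ ^ 4 : ℝ) : ℂ)) / (1 - (‖x‖ : ℂ) ^ 2))‖ ≤
          2 * ‖x‖ / (1 - ‖x‖ ^ 2) * ((φ (A x)).re - a * ‖x‖ ^ 2)))
    ∧
    ((∀ x ∈ ball (0 : X) 1, ∀ φ ∈ suppFun x, a * ‖x‖ ^ 2 ≤ (φ (f x)).re) ↔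
      (∀ x ∈ ball (0 : X) 1, ∀ φ ∈ suppFun x,
        (φ (A x)).re * ((1 - ‖x‖) / (1 + ‖x‖)) + 2 * a * ‖x‖ ^ 3 / (1 + ‖x‖) ≤
          (φ (f x)).re)) := by
  have hA' : HasFDerivAt f A 0 :=
    hA ▸ (hf.differentiableAt (ball_mem_nhds 0 one_pos)).hasFDerivAt
  have hi_ii := norm_sub_discCenter_le_of_forall_le_re a hf hf0 hA'
  refine ⟨⟨hi_ii, fun hii x hx φ hφ ↦ ?_⟩, fun hi x hx φ hφ ↦ ?_,
    mul_sq_le_re_of_forall_reLowerBound_le a hf hf0 hA'⟩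
  · rcases eq_or_ne x 0 with rfl | hx0
    · simp [hf0]
    exact mul_sq_le_re_of_norm_sub_discCenter_le (norm_pos_iff.2 hx0)
      (mem_ball_zero_iff.1 hx) (hii x hx φ hφ)
  · exact reLowerBound_le_re_of_norm_sub_discCenter_le (norm_nonneg x)
      (mem_ball_zero_iff.1 hx) (hi_ii hi x hx φ hφ)

/-- Proposition 2.4 (equivalence of (i), (ii), (iii)). -/
theorem stmt_0 {X : Type*} [NormedAddCommGroup X] [NormedSpace ℂ X]
    (a : ℝ) (ha : 0 ≤ a) (f : X → X)
    (hf : DifferentiableOn ℂ f (ball 0 1)) (hf0 : f 0 = 0)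
    (A : X →L[ℂ] X) (hA : A = fderiv ℂ f 0) :
    ((∀ x ∈ ball (0 : X) 1, ∀ φ ∈ suppFun x, a * ‖x‖ ^ 2 ≤ (φ (f x)).re) ↔
      (∀ x ∈ ball (0 : X) 1, ∀ φ ∈ suppFun x,
        ‖(φ (f x) -
            (φ (A x) + (‖x‖ : ℂ) ^ 2 * (starRingEnd ℂ) (φ (A x)) -
              ((2 * a * ‖x‖ ^ 4 : ℝ) : ℂ)) / (1 - (‖x‖ : ℂ) ^ 2))‖ ≤
          2 * ‖x‖ / (1 - ‖x‖ ^ 2) * ((φ (A x)).re - a * ‖x‖ ^ 2)))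
    ∧
    ((∀ x ∈ ball (0 : X) 1, ∀ φ ∈ suppFun x, a * ‖x‖ ^ 2 ≤ (φ (f x)).re) ↔
      (∀ x ∈ ball (0 : X) 1, ∀ φ ∈ suppFun x,
        (φ (A x)).re * ((1 - ‖x‖) / (1 + ‖x‖)) + 2 * a * ‖x‖ ^ 3 / (1 + ‖x‖) ≤
          (φ (f x)).re)) :=
  stmt_0_general a f hf hf0 A hA
end

section
/- Let a ≥ 0 and let f ∈ N_a satisfy Assumption A. Set α(λ) := min( 3/(1 − λK), 1/(1 + λa) ). Then for every λ > 0 and every x ∈ B, ‖G_λ(x)‖ ≤ α(λ)·‖x‖. Consequently, sup_{x ∈ B} ‖G_λ(x)‖ ≤ α(λ) → 0 as λ → ∞, i.e., the resolvent family {G_λ}_{λ>0} converges to zero uniformly on B as λ → ∞. -/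
open Complex Metric

/-- `G` is the (non-linear) resolvent of `f` with parameter `lam`: a holomorphic
self-mapping of the unit ball such that `w = G x` is the unique solution in the ball
of `w + lam f(w) = x`. -/
def IsResolvent {X : Type*} [NormedAddCommGroup X] [NormedSpace ℂ X]
    (f : X → X) (lam : ℝ) (G : X → X) : Prop :=
  DifferentiableOn ℂ G (ball 0 1) ∧
    ∀ x ∈ ball (0 : X) 1, G x ∈ ball (0 : X) 1 ∧ G x + (lam : ℂ) • f (G x) = x ∧
      ∀ w ∈ ball (0 : X) 1, w + (lam : ℂ) • f w = x → w = G x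

/-! For `w = G_λ x` and `φ ∈ J(w)`, applying `φ` to `w + λ f(w) = x` gives
`‖w‖² + λ Re φ(f w) ≤ ‖w‖ ‖x‖`. On the complex line through `u = w / ‖w‖` the function
`p(z) = ψ(f(z u)) / z`, with `ψ = φ / ‖w‖`, is holomorphic on the disc, has `Re p ≥ a` by the
`N_a` condition, and `Re p(0) = Re ψ(f'(0) u) ≥ -K`. Harnack's inequality for functions of
nonnegative real part (Schwarz's lemma applied to their Cayley transform) then gives
`Re φ(f w) ≥ ‖w‖² (a + (-K - a)(1 - ‖w‖)/(1 + ‖w‖))`. Together with `‖x‖ < 1`, an elementary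
estimate turns this into `‖w‖ (1 - λK) ≤ 3 ‖x‖` and `‖w‖ (1 + λa) ≤ ‖x‖`. -/

open Topology Filter

theorem re_mul_div_le_re_of_mul_one_sub_eq {c ω Q : ℂ} {t : ℝ} (hc : 0 ≤ c.re)
    (hω : ‖ω‖ ≤ t) (ht : t < 1) (h : Q * (1 - ω) = c + ω * (starRingEnd ℂ) c) :
    c.re * ((1 - t) / (1 + t)) ≤ Q.re := by
  -- `Re Q = Re c (1 - |ω|²) / |1 - ω|²`, and `(1 - |ω|²) / |1 - ω|² ≥ (1 - |ω|) / (1 + |ω|)`.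
  have hRe := congrArg re h
  have hIm := congrArg im h
  simp only [mul_re, mul_im, sub_re, sub_im, add_re, add_im, one_re, one_im,
    conj_re, conj_im] at hRe hIm
  have hsq : ω.re ^ 2 + ω.im ^ 2 ≤ t ^ 2 := by
    have h2 : ‖ω‖ ^ 2 ≤ t ^ 2 := pow_le_pow_left₀ (norm_nonneg ω) hω 2
    rw [Complex.sq_norm, normSq_apply] at h2
    linarith
  have hut : -t ≤ ω.re := (abs_le.mp ((abs_re_le_norm ω).trans hω)).1
  have hD : 0 < (1 - ω.re) ^ 2 + ω.im ^ 2 := by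
    nlinarith [(le_abs_self ω.re).trans ((abs_re_le_norm ω).trans hω)]
  have hQ : Q.re * ((1 - ω.re) ^ 2 + ω.im ^ 2) = c.re * (1 - (ω.re ^ 2 + ω.im ^ 2)) := by
    linear_combination (1 - ω.re) * hRe - ω.im * hIm
  have hfactor :
      (1 - t) * ((1 - ω.re) ^ 2 + ω.im ^ 2) ≤ (1 - (ω.re ^ 2 + ω.im ^ 2)) * (1 + t) := by
    nlinarith [mul_nonneg (by linarith : (0:ℝ) ≤ 1 - t) (by linarith : (0:ℝ) ≤ t + ω.re)]
  rw [← mul_div_assoc, div_le_iff₀ (by linarith [(norm_nonneg ω).trans hω])]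
  refine le_of_mul_le_mul_right ?_ hD
  nlinarith [mul_le_mul_of_nonneg_left hfactor hc]

theorem harnack_le_re_of_re_nonneg {q : ℂ → ℂ} (hq : DifferentiableOn ℂ q (ball 0 1))
    (hre : ∀ z ∈ ball (0 : ℂ) 1, 0 ≤ (q z).re) {z : ℂ} (hz : z ∈ ball (0 : ℂ) 1) :
    (q 0).re * ((1 - ‖z‖) / (1 + ‖z‖)) ≤ (q z).re := by
  rcases (hre 0 (mem_ball_self one_pos)).eq_or_lt with hq0 | hq0
  · rw [← hq0, zero_mul]
    exact hre z hz
  set d : ℂ → ℂ := fun z => q z + (starRingEnd ℂ) (q 0)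
  have hd : ∀ z ∈ ball (0 : ℂ) 1, d z ≠ 0 := fun z hz hdz => by
    have := congrArg re hdz
    simp only [d, add_re, conj_re, zero_re] at this
    linarith [hre z hz]
  -- The Cayley transform of `q`, normalized to vanish at `0`.
  set w : ℂ → ℂ := fun z => (q z - q 0) / d z
  have hw : Set.MapsTo w (ball 0 1) (closedBall 0 1) := fun z hz => by
    rw [mem_closedBall_zero_iff, norm_div, div_le_one (norm_pos_iff.mpr (hd z hz)),
      ← sq_le_sq₀ (norm_nonneg _) (norm_nonneg _), Complex.sq_norm, Complex.sq_norm,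
      normSq_apply, normSq_apply]
    simp only [d, sub_re, sub_im, add_re, add_im, conj_re, conj_im]
    nlinarith [hre z hz]
  have hschwarz : ‖w z‖ ≤ ‖z‖ :=
    Complex.norm_le_norm_of_mapsTo_ball ((hq.sub_const _).div (hq.add_const _) hd) hw
      (by simp [w]) (mem_ball_zero_iff.mp hz)
  refine re_mul_div_le_re_of_mul_one_sub_eq hq0.le hschwarz (mem_ball_zero_iff.mp hz) ?_
  have hdz : q z + (starRingEnd ℂ) (q 0) ≠ 0 := hd z hz
  simp only [w, d]
  field_simp
  ring

theorem harnack_le_re_of_le_re {p : ℂ → ℂ} {a : ℝ} (hp : DifferentiableOn ℂ p (ball 0 1))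
    (hre : ∀ z ∈ ball (0 : ℂ) 1, a ≤ (p z).re) {z : ℂ} (hz : z ∈ ball (0 : ℂ) 1) :
    a + ((p 0).re - a) * ((1 - ‖z‖) / (1 + ‖z‖)) ≤ (p z).re := by
  have h := harnack_le_re_of_re_nonneg (q := fun z => p z - a) (hp.sub_const _)
    (fun z hz => by simpa using hre z hz) hz
  simp only [sub_re, ofReal_re] at h
  linarith

section

variable {X : Type*} [NormedAddCommGroup X] [NormedSpace ℂ X]

theorem smul_mem_suppFun {x : X} {φ : X →L[ℂ] ℂ} (hφ : φ ∈ suppFun x) (z : ℂ) :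
    (starRingEnd ℂ z) • φ ∈ suppFun (z • x) := by
  obtain ⟨hφx, hφn⟩ := hφ
  refine ⟨?_, ?_⟩
  · rw [smul_apply, map_smul, smul_eq_mul, smul_eq_mul, hφx, norm_smul,
      ← mul_assoc, mul_comm _ z, mul_conj, ← Complex.sq_norm]
    push_cast
    ring
  · rw [norm_smul, norm_smul, RCLike.norm_conj, hφn]

theorem exists_mem_suppFun (x : X) : ∃ φ, φ ∈ suppFun x := by
  rcases eq_or_ne x 0 with rfl | hx
  · exact ⟨0, by simp [suppFun]⟩
  obtain ⟨ψ, hψn, hψx⟩ := exists_dual_vector ℂ x (norm_ne_zero_iff.mpr hx)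
  refine ⟨(‖x‖ : ℂ) • ψ, ?_, ?_⟩
  · rw [smul_apply, hψx, smul_eq_mul, sq]
    rfl
  · rw [norm_smul, hψn, mul_one, norm_real, norm_norm]

theorem neg_re_le_KA_pi (A : X →L[ℂ] X) {u : X} (hu : ‖u‖ = 1) {ψ : X →L[ℂ] ℂ}
    (hψ : ψ ∈ suppFun u) : -(ψ (A u)).re ≤ KA A Real.pi := by
  have hexp : exp (-(Real.pi : ℂ) * I) = -1 := by
    rw [neg_mul, exp_neg, exp_pi_mul_I]
    norm_num
  simp only [KA, hexp, neg_one_mul, neg_re]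
  refine le_csSup ⟨‖A‖, ?_⟩ ⟨u, hu, ψ, hψ, rfl⟩
  rintro s ⟨y, hy, φ, ⟨-, hφ⟩, rfl⟩
  calc -(φ (A y)).re ≤ ‖φ (A y)‖ := (neg_le_abs _).trans (abs_re_le_norm _)
    _ ≤ ‖φ‖ * (‖A‖ * ‖y‖) := φ.le_opNorm_of_le (A.le_opNorm y)
    _ = ‖A‖ := by rw [hφ, hy, one_mul, mul_one]

end

section

variable {X : Type*} [NormedAddCommGroup X] [NormedSpace ℂ X] {f : X → X} {u : X}
  {ψ : X →L[ℂ] ℂ}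

noncomputable def rayQuotient (f : X → X) (u : X) (ψ : X →L[ℂ] ℂ) : ℂ → ℂ :=
  dslope (fun z : ℂ => ψ (f (z • u))) 0

theorem mul_rayQuotient (hf0 : f 0 = 0) (z : ℂ) :
    z * rayQuotient f u ψ z = ψ (f (z • u)) := by
  simpa [rayQuotient, hf0] using sub_smul_dslope (fun z : ℂ => ψ (f (z • u))) 0 z

theorem differentiableOn_rayQuotient (hf : DifferentiableOn ℂ f (ball 0 1)) (hu : ‖u‖ ≤ 1) :
    DifferentiableOn ℂ (rayQuotient f u ψ) (ball 0 1) := by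
  have hmaps : Set.MapsTo (fun z : ℂ => z • u) (ball 0 1) (ball 0 1) := fun z hz => by
    rw [mem_ball_zero_iff, norm_smul]
    exact (mul_le_of_le_one_right (norm_nonneg z) hu).trans_lt (mem_ball_zero_iff.mp hz)
  refine (differentiableOn_dslope (ball_mem_nhds _ one_pos)).mpr ?_
  exact ψ.differentiable.comp_differentiableOn
    (hf.comp (differentiable_id.smul_const u).differentiableOn hmaps)

theorem rayQuotient_zero (hf : DifferentiableAt ℂ f 0) :
    rayQuotient f u ψ 0 = ψ (fderiv ℂ f 0 u) := by
  have hline : HasDerivAt (fun z : ℂ => f (z • u)) (fderiv ℂ f 0 u) 0 := by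
    have hu : HasDerivAt (fun z : ℂ => z • u) u 0 := by
      simpa using (hasDerivAt_id (0 : ℂ)).smul_const u
    have hf' : HasFDerivAt f (fderiv ℂ f 0) ((0 : ℂ) • u) := by
      simpa using hf.hasFDerivAt
    exact hf'.comp_hasDerivAt 0 hu
  rw [rayQuotient, dslope_same]
  exact (ψ.hasFDerivAt.comp_hasDerivAt 0 hline).deriv

theorem IsNa.le_re_rayQuotient {a : ℝ} (hf : IsNa a f) (hu : ‖u‖ = 1) (hψ : ψ ∈ suppFun u)
    {z : ℂ} (hz : z ∈ ball (0 : ℂ) 1) : a ≤ (rayQuotient f u ψ z).re := by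
  have hne : ∀ z ∈ ball (0 : ℂ) 1, z ≠ 0 → a ≤ (rayQuotient f u ψ z).re := by
    intro z hz hz0
    have hzu : ‖z • u‖ = ‖z‖ := by rw [norm_smul, hu, mul_one]
    have h := hf.2.2 (z • u) (by rwa [mem_ball_zero_iff, hzu, ← mem_ball_zero_iff])
      _ (smul_mem_suppFun hψ z)
    rw [smul_apply, smul_eq_mul, ← mul_rayQuotient hf.2.1, ← mul_assoc, conj_mul', hzu,
      ← ofReal_pow, re_ofReal_mul] at h
    exact le_of_mul_le_mul_left (by linarith) (by positivity : 0 < ‖z‖ ^ 2)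
  rcases eq_or_ne z 0 with rfl | hz0
  · have hcont : ContinuousAt (rayQuotient f u ψ) 0 :=
      (differentiableOn_rayQuotient hf.1 hu.le).continuousOn.continuousAt
        (ball_mem_nhds _ one_pos)
    refine ge_of_tendsto ((continuous_re.continuousAt.comp hcont).tendsto.mono_left
      (nhdsWithin_le_nhds (s := {0}ᶜ))) ?_
    filter_upwards [nhdsWithin_le_nhds (ball_mem_nhds (0 : ℂ) one_pos), self_mem_nhdsWithin]
      with z hz hz0 using hne z hz hz0
  · exact hne z hz hz0

end

theorem IsNa.harnack_le_re_apply {X : Type*} [NormedAddCommGroup X] [NormedSpace ℂ X] {a : ℝ}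
    {f : X → X} (hf : IsNa a f) {x : X} (hx : x ∈ ball (0 : X) 1) {φ : X →L[ℂ] ℂ}
    (hφ : φ ∈ suppFun x) :
    ‖x‖ ^ 2 * (a + (-KA (fderiv ℂ f 0) Real.pi - a) * ((1 - ‖x‖) / (1 + ‖x‖))) ≤
      (φ (f x)).re := by
  rcases eq_or_ne x 0 with rfl | hx0
  · have hφ0 : φ = 0 := norm_eq_zero.mp (by simpa using hφ.2)
    simp [hφ0]
  set r := ‖x‖
  have hr0 : 0 < r := norm_pos_iff.mpr hx0
  have hr1 : r < 1 := mem_ball_zero_iff.mp hx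
  have hrC : (r : ℂ) ≠ 0 := ofReal_ne_zero.mpr hr0.ne'
  set u : X := (r⁻¹ : ℂ) • x
  have hu : ‖u‖ = 1 := by
    rw [norm_smul, norm_inv, norm_real, Real.norm_of_nonneg hr0.le, inv_mul_cancel₀ hr0.ne']
  have hxu : (r : ℂ) • u = x := by rw [smul_smul, mul_inv_cancel₀ hrC, one_smul]
  have hψ : (r⁻¹ : ℂ) • φ ∈ suppFun u := by simpa using smul_mem_suppFun hφ (r⁻¹ : ℂ)
  set p := rayQuotient f u ((r⁻¹ : ℂ) • φ) with hp
  have hφf : (φ (f x)).re = r ^ 2 * (p r).re := by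
    have h := mul_rayQuotient hf.2.1 (r : ℂ) (u := u) (ψ := (r⁻¹ : ℂ) • φ)
    rw [hxu, smul_apply, smul_eq_mul, eq_inv_mul_iff_mul_eq₀ hrC] at h
    rw [← h, ← mul_assoc, ← ofReal_mul, re_ofReal_mul, sq]
  have hp0 : -KA (fderiv ℂ f 0) Real.pi ≤ (p 0).re := by
    rw [hp, rayQuotient_zero (hf.1.differentiableAt (ball_mem_nhds _ one_pos))]
    linarith [neg_re_le_KA_pi (fderiv ℂ f 0) hu hψ]
  have hharnack := harnack_le_re_of_le_re (differentiableOn_rayQuotient hf.1 hu.le)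
    (fun z hz => hf.le_re_rayQuotient hu hψ hz) (z := r) (by simpa [abs_of_pos hr0] using hr1)
  rw [norm_real, Real.norm_of_nonneg hr0.le] at hharnack
  have hs : 0 ≤ (1 - r) / (1 + r) := div_nonneg (by linarith) (by linarith)
  rw [hφf]
  gcongr
  nlinarith

theorem IsResolvent.harnack_le_norm {X : Type*} [NormedAddCommGroup X] [NormedSpace ℂ X]
    {a lam : ℝ} {f G : X → X} (hf : IsNa a f) (hG : IsResolvent f lam G) (hlam : 0 ≤ lam)
    {x : X} (hx : x ∈ ball (0 : X) 1) :
    ‖G x‖ * (1 + lam * a) +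
        lam * (-KA (fderiv ℂ f 0) Real.pi - a) * ‖G x‖ * ((1 - ‖G x‖) / (1 + ‖G x‖)) ≤
      ‖x‖ := by
  obtain ⟨hGx, hGeq, -⟩ := hG.2 x hx
  set w := G x
  obtain ⟨φ, hφ⟩ := exists_mem_suppFun w
  have hgrowth := hf.harnack_le_re_apply hGx hφ
  have hφx : (φ x).re = ‖w‖ ^ 2 + lam * (φ (f w)).re := by
    rw [← hGeq, map_add, map_smul, smul_eq_mul, add_re, re_ofReal_mul, hφ.1, ← ofReal_pow,
      ofReal_re]
  have hle : (φ x).re ≤ ‖w‖ * ‖x‖ := (re_le_norm _).trans (hφ.2 ▸ φ.le_opNorm x)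
  rcases (norm_nonneg w).eq_or_lt with hw0 | hw0
  · simp [← hw0]
  refine le_of_mul_le_mul_left ?_ hw0
  nlinarith [mul_le_mul_of_nonneg_left hgrowth hlam]

theorem mul_add_le_three_mul_of_le {r t b c : ℝ} (hr0 : 0 ≤ r) (hr1 : r < 1) (ht : t < 1)
    (hb : 1 ≤ b) (hc : 0 ≤ c) (h : r * b + c * r * ((1 - r) / (1 + r)) ≤ t) :
    r * (b + c) ≤ 3 * t := by
  have hmain : r * b * (1 + r) + c * r * (1 - r) ≤ t * (1 + r) := by
    have e : c * r * ((1 - r) / (1 + r)) * (1 + r) = c * r * (1 - r) := by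
      field_simp
    nlinarith [mul_le_mul_of_nonneg_right h (by linarith : (0 : ℝ) ≤ 1 + r)]
  rcases le_or_gt r (1 / 2) with hr | hr
  · nlinarith [mul_nonneg (mul_nonneg hc hr0) (by linarith : (0 : ℝ) ≤ 2 - 4 * r),
      mul_nonneg (mul_nonneg hr0 (by linarith : (0 : ℝ) ≤ b)) (by linarith : (0 : ℝ) ≤ 1 + r)]
  · have hcr : c * r ≤ 1 + r := by
      nlinarith [mul_nonneg (mul_nonneg hr0 (by linarith : (0 : ℝ) ≤ 1 + r))
        (by linarith : (0 : ℝ) ≤ b - 1)]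
    nlinarith [mul_le_mul_of_nonneg_right hcr (by linarith : (0 : ℝ) ≤ 4 * r - 2),
      mul_nonneg (mul_nonneg (by linarith : (0 : ℝ) ≤ b - 1) hr0) (by linarith : (0 : ℝ) ≤ 1 + r)]

theorem tendsto_min_div_atTop {K a : ℝ} (hK : K < 0) (ha : 0 ≤ a) :
    Tendsto (fun lam : ℝ => min (3 / (1 - lam * K)) (1 / (1 + lam * a))) atTop (𝓝 0) := by
  have hden : Tendsto (fun lam : ℝ => 1 - lam * K) atTop atTop :=
    tendsto_atTop_add_const_left _ 1
      ((tendsto_id.atTop_mul_const (neg_pos.mpr hK)).congr fun lam => by simp only [id]; ring)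
  refine squeeze_zero' ?_ (Eventually.of_forall fun lam => min_le_left _ _)
    (tendsto_const_nhds.div_atTop hden)
  filter_upwards [eventually_ge_atTop 0] with lam hlam
  have : 0 < 1 - lam * K := by nlinarith
  have : 0 < 1 + lam * a := by nlinarith
  positivity

theorem stmt_8_general {X : Type*} [NormedAddCommGroup X] [NormedSpace ℂ X]
    (a : ℝ) (ha : 0 ≤ a) (f : X → X) (hf : IsNa a f)
    (K : ℝ) (hKdef : K = KA (fderiv ℂ f 0) Real.pi) (hK : K < 0) (hKa : K + a ≤ 0)
    (G : ℝ → X → X) (hG : ∀ lam, 0 < lam → IsResolvent f lam (G lam)) :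
    (∀ lam, 0 < lam → ∀ x ∈ ball (0 : X) 1,
      ‖G lam x‖ ≤ min (3 / (1 - lam * K)) (1 / (1 + lam * a)) * ‖x‖) ∧
    Filter.Tendsto (fun lam : ℝ => min (3 / (1 - lam * K)) (1 / (1 + lam * a)))
      Filter.atTop (nhds 0) := by
  refine ⟨fun lam hlam x hx => ?_, tendsto_min_div_atTop hK ha⟩
  have hbound := (hG lam hlam).harnack_le_norm hf hlam.le hx
  rw [← hKdef] at hbound
  have hGx : ‖G lam x‖ < 1 := mem_ball_zero_iff.mp ((hG lam hlam).2 x hx).1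
  have hc : 0 ≤ lam * (-K - a) := mul_nonneg hlam.le (by linarith)
  have hs : 0 ≤ (1 - ‖G lam x‖) / (1 + ‖G lam x‖) := div_nonneg (by linarith) (by positivity)
  rw [min_mul_of_nonneg _ _ (norm_nonneg x), div_mul_eq_mul_div, div_mul_eq_mul_div,
    le_min_iff, le_div_iff₀ (by nlinarith), le_div_iff₀ (by nlinarith), one_mul]
  constructor
  · calc ‖G lam x‖ * (1 - lam * K) = ‖G lam x‖ * ((1 + lam * a) + lam * (-K - a)) := by ring
      _ ≤ 3 * ‖x‖ := mul_add_le_three_mul_of_le (norm_nonneg _) hGx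
          (mem_ball_zero_iff.mp hx) (by nlinarith) hc (by linarith)
  · nlinarith [mul_nonneg (mul_nonneg hc (norm_nonneg (G lam x))) hs]

/-- Corollary 4.2: `‖G_λ(x)‖ ≤ α(λ)‖x‖` with `α(λ) = min(3/(1-λK), 1/(1+λa))`,
and the resolvent family converges to zero uniformly on the ball as `λ → ∞`. -/
theorem stmt_8 {X : Type*} [NormedAddCommGroup X] [NormedSpace ℂ X] [Nontrivial X]
    (a : ℝ) (ha : 0 ≤ a) (f : X → X) (hf : IsNa a f)
    (K : ℝ) (hKdef : K = KA (fderiv ℂ f 0) Real.pi) (hK : K < 0) (hKa : K + a ≤ 0)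
    (G : ℝ → X → X) (hG : ∀ lam, 0 < lam → IsResolvent f lam (G lam)) :
    (∀ lam, 0 < lam → ∀ x ∈ ball (0 : X) 1,
      ‖G lam x‖ ≤ min (3 / (1 - lam * K)) (1 / (1 + lam * a)) * ‖x‖) ∧
    Filter.Tendsto (fun lam : ℝ => min (3 / (1 - lam * K)) (1 / (1 + lam * a)))
      Filter.atTop (nhds 0) :=
  stmt_8_general a ha f hf K hKdef hK hKa G hG
end

section
/- Let a ≥ 0 and let f ∈ N_a satisfy Assumption A, and set α(λ) := min( 3/(1 − λK), 1/(1 + λa) ). If λ > 0 and w ∈ B satisfies α(λ) ≤ ‖w‖ < 1, then ‖w + λ f(w)‖ ≥ 1. -/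
/-!
Put `r = ‖w‖`, `u = w / r`, and let `φ` be a norming functional of `u`. The slice
`p z = φ (f (z • u)) / z` is holomorphic on the unit disc with `Re p ≥ a` (test the `N_a`
condition against the support functional `conj z • φ` at `z • u`) and `Re p 0 = Re φ (A u) ≥ -K`.
Harnack's inequality for functions of positive real part, a consequence of the Schwarz lemma,
gives `Re p r ≥ a + (-K - a) (1 - r) / (1 + r)`. Hence
`‖w + λ f w‖ ≥ Re φ (w + λ f w) = r + λ r Re p r`, and the choice of `α(λ)` makes the right-hand
side at least `1`.
-/

open Complex Metric

open ComplexConjugate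

namespace Complex

theorem normSq_add_conj (x y : ℂ) :
    normSq (x + conj y) = normSq (x - y) + 4 * x.re * y.re := by
  simp only [normSq_apply, add_re, add_im, sub_re, sub_im, conj_re, conj_im]
  ring

theorem harnack_re_of_re_pos {p : ℂ → ℂ} (hp : DifferentiableOn ℂ p (ball 0 1))
    (hpos : ∀ z ∈ ball (0 : ℂ) 1, 0 < (p z).re) {z : ℂ} (hz : ‖z‖ < 1) :
    (p 0).re * ((1 - ‖z‖) / (1 + ‖z‖)) ≤ (p z).re := by
  have hden : ∀ w ∈ ball (0 : ℂ) 1, p w + conj (p 0) ≠ 0 := fun w hw h ↦ by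
    have := congrArg re h
    simp only [add_re, conj_re, zero_re] at this
    linarith [hpos w hw, hpos 0 (mem_ball_self one_pos)]
  -- the Cayley transform centred at `p 0` maps the disc to itself and fixes `0`
  set q : ℂ → ℂ := fun w ↦ (p w - p 0) / (p w + conj (p 0))
  have hq : DifferentiableOn ℂ q (ball 0 1) :=
    (hp.sub_const _).div (hp.add_const _) hden
  have hmaps : Set.MapsTo q (ball 0 1) (closedBall 0 1) := fun w hw ↦ by
    rw [mem_closedBall_zero_iff, norm_div, div_le_one (norm_pos_iff.2 (hden w hw)),
      ← sq_le_sq₀ (norm_nonneg _) (norm_nonneg _), Complex.sq_norm, Complex.sq_norm,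
      normSq_add_conj]
    have := mul_pos (hpos w hw) (hpos 0 (mem_ball_self one_pos))
    linarith
  have hschwarz : ‖p z - p 0‖ ≤ ‖z‖ * ‖p z + conj (p 0)‖ := by
    have := norm_le_norm_of_mapsTo_ball hq hmaps (by simp [q]) hz
    rwa [norm_div, div_le_iff₀ (norm_pos_iff.2 (hden z (mem_ball_zero_iff.2 hz)))] at this
  have hsq : normSq (p z - p 0) ≤ ‖z‖ ^ 2 * normSq (p z + conj (p 0)) := by
    rw [← Complex.sq_norm, ← Complex.sq_norm, ← mul_pow]
    exact pow_le_pow_left₀ (norm_nonneg _) hschwarz 2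
  rw [normSq_add_conj, normSq_apply, sub_re, sub_im] at hsq
  set x := (p z).re
  set β := (p 0).re
  set t := ‖z‖
  have hx : 0 < x := hpos z (mem_ball_zero_iff.2 hz)
  have hβ : 0 < β := hpos 0 (mem_ball_self one_pos)
  have ht : 0 ≤ t := norm_nonneg z
  have hre_sq : (β - x) ^ 2 ≤ (t * (x + β)) ^ 2 := by
    nlinarith [mul_nonneg (by nlinarith : 0 ≤ 1 - t ^ 2) (mul_self_nonneg ((p z).im - (p 0).im))]
  have := le_of_sq_le_sq hre_sq (by positivity)
  rw [mul_div_assoc', div_le_iff₀ (by positivity)]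
  linarith

theorem harnack_re {p : ℂ → ℂ} {a : ℝ} (hp : DifferentiableOn ℂ p (ball 0 1))
    (hre : ∀ z ∈ ball (0 : ℂ) 1, a ≤ (p z).re) {z : ℂ} (hz : ‖z‖ < 1) :
    a + ((p 0).re - a) * ((1 - ‖z‖) / (1 + ‖z‖)) ≤ (p z).re := by
  have hs : 0 ≤ (1 - ‖z‖) / (1 + ‖z‖) := div_nonneg (by linarith) (by positivity)
  refine le_of_forall_pos_le_add fun ε hε ↦ ?_
  have := harnack_re_of_re_pos (p := fun w ↦ p w - (a - ε : ℝ)) (hp.sub_const _)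
    (fun w hw ↦ by simp only [sub_re, ofReal_re]; linarith [hre w hw]) hz
  simp only [sub_re, ofReal_re] at this
  nlinarith [mul_nonneg hε.le hs]

end Complex

section

variable {X : Type _} [NormedAddCommGroup X] [NormedSpace ℂ X]

theorem re_exp_mul_apply_le_KA (A : X →L[ℂ] X) (θ : ℝ) {x : X} (hx : ‖x‖ = 1)
    {φ : X →L[ℂ] ℂ} (hφ : φ ∈ suppFun x) :
    (exp (-(θ : ℂ) * I) * φ (A x)).re ≤ KA A θ := by
  refine le_csSup ⟨‖A‖, ?_⟩ ⟨x, hx, φ, hφ, rfl⟩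
  rintro _ ⟨y, hy, ψ, hψ, rfl⟩
  calc _ ≤ ‖exp (-(θ : ℂ) * I) * ψ (A y)‖ := re_le_norm _
    _ = ‖ψ (A y)‖ := by simp [norm_exp]
    _ ≤ ‖ψ‖ * (‖A‖ * ‖y‖) := ψ.le_of_opNorm_le_of_le le_rfl (A.le_opNorm y)
    _ = ‖A‖ := by rw [hψ.2, hy, one_mul, mul_one]

variable {a : ℝ} {f : X → X} {u : X} {φ : X →L[ℂ] ℂ}

theorem conj_smul_mem_suppFun_s9 (hu : ‖u‖ = 1) (hφ : ‖φ‖ = 1)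
    (hφu : φ u = 1) (z : ℂ) : conj z • φ ∈ suppFun (z • u) := by
  refine ⟨?_, ?_⟩
  · simp [hφu, hu, norm_smul, ← mul_conj', mul_comm]
  · rw [norm_smul, norm_smul, RCLike.norm_conj, hu, hφ]

theorem dslope_comp_smul_zero (hf : DifferentiableAt ℂ f 0) :
    dslope (fun z : ℂ ↦ φ (f (z • u))) 0 0 = φ (fderiv ℂ f 0 u) := by
  have hline : HasDerivAt (fun z : ℂ ↦ z • u) u 0 := by
    simpa using (hasDerivAt_id (0 : ℂ)).smul_const u
  have hf' : HasFDerivAt f (fderiv ℂ f 0) ((fun z : ℂ ↦ z • u) 0) := by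
    simpa using hf.hasFDerivAt
  rw [dslope_same]
  exact (φ.hasFDerivAt.comp_hasDerivAt 0 (hf'.comp_hasDerivAt 0 hline)).deriv

namespace IsNa

theorem differentiableOn_dslope (hf : IsNa a f) (hu : ‖u‖ = 1) :
    DifferentiableOn ℂ (dslope (fun z : ℂ ↦ φ (f (z • u))) 0) (ball 0 1) := by
  refine (Complex.differentiableOn_dslope (ball_mem_nhds 0 one_pos)).2 ?_
  refine φ.differentiable.comp_differentiableOn (hf.1.comp (by fun_prop) fun z hz ↦ ?_)
  simpa [norm_smul, hu] using hz

theorem le_re_dslope (hf : IsNa a f) (hu : ‖u‖ = 1) (hφ : ‖φ‖ = 1) (hφu : φ u = 1)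
    {z : ℂ} (hz : z ∈ ball 0 1) : a ≤ (dslope (fun z : ℂ ↦ φ (f (z • u))) 0 z).re := by
  set p := dslope (fun z : ℂ ↦ φ (f (z • u))) 0
  have hpunct : ∀ z ∈ ball (0 : ℂ) 1, z ≠ 0 → a ≤ (p z).re := fun z hz hz0 ↦ by
    have hN := hf.2.2 (z • u) (by simpa [norm_smul, hu] using hz) _
      (conj_smul_mem_suppFun_s9 hu hφ hφu z)
    have hslice : φ (f (z • u)) = z * p z := by
      simpa [hf.2.1, p] using (sub_smul_dslope (fun z : ℂ ↦ φ (f (z • u))) 0 z).symm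
    rw [smul_apply, hslice, smul_eq_mul, ← mul_assoc, conj_mul',
      norm_smul, hu, mul_one, ← ofReal_pow, re_ofReal_mul, mul_comm] at hN
    exact le_of_mul_le_mul_left hN (pow_pos (norm_pos_iff.2 hz0) 2)
  rcases eq_or_ne z 0 with rfl | hz0
  · have hcont : ContinuousAt p 0 :=
      ((hf.differentiableOn_dslope hu).differentiableAt (ball_mem_nhds 0 one_pos)).continuousAt
    refine ge_of_tendsto ((continuous_re.continuousAt.comp hcont).tendsto.mono_left
      (nhdsWithin_le_nhds (s := {0}ᶜ))) ?_
    filter_upwards [mem_nhdsWithin_of_mem_nhds (ball_mem_nhds (0 : ℂ) one_pos),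
      self_mem_nhdsWithin] with y hy hy0
    exact hpunct y hy hy0
  · exact hpunct z hz hz0

theorem le_re_apply_smul (hf : IsNa a f) (hu : ‖u‖ = 1) (hφ : ‖φ‖ = 1) (hφu : φ u = 1)
    {t : ℝ} (ht0 : 0 ≤ t) (ht1 : t < 1) :
    t * (a + ((φ (fderiv ℂ f 0 u)).re - a) * ((1 - t) / (1 + t))) ≤
      (φ (f ((t : ℂ) • u))).re := by
  have hnorm : ‖(t : ℂ)‖ = t := by simp [ht0]
  have hharnack := Complex.harnack_re (hf.differentiableOn_dslope (φ := φ) hu)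
    (fun z hz ↦ hf.le_re_dslope hu hφ hφu hz) (hnorm.symm ▸ ht1 : ‖(t : ℂ)‖ < 1)
  rw [hnorm, dslope_comp_smul_zero (hf.1.differentiableAt (ball_mem_nhds 0 one_pos))]
    at hharnack
  have hslice := sub_smul_dslope (fun z : ℂ ↦ φ (f (z • u))) 0 t
  simp only [sub_zero, zero_smul, hf.2.1, map_zero, smul_eq_mul] at hslice
  rw [← hslice, re_ofReal_mul]
  exact mul_le_mul_of_nonneg_left hharnack ht0

end IsNa

end

theorem one_le_add_mul_harnack_bound {a K lam r : ℝ} (ha : 0 ≤ a) (hK : K < 0)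
    (hKa : K + a ≤ 0) (hlam : 0 < lam) (hr0 : 0 < r) (hr1 : r < 1)
    (hα : min (3 / (1 - lam * K)) (1 / (1 + lam * a)) ≤ r) :
    1 ≤ r + lam * (r * (a + (-K - a) * ((1 - r) / (1 + r)))) := by
  have hs0 : 0 ≤ (1 - r) / (1 + r) := div_nonneg (by linarith) (by linarith)
  rcases min_le_iff.1 hα with h3 | h1
  · rw [div_le_iff₀ (by nlinarith)] at h3
    have hs : lam * (r * (-K * ((1 - r) / (1 + r)))) ≤
        lam * (r * (a + (-K - a) * ((1 - r) / (1 + r)))) := by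
      have : (1 - r) / (1 + r) ≤ 1 := div_le_one_of_le₀ (by linarith) (by linarith)
      gcongr
      nlinarith
    -- with `c = -λK` this is `(1 - r) (c r - 1 - r) ≥ 0`, and `r (1 + c) ≥ 3` gives `c r ≥ 1 + r`
    have hkey : 1 ≤ r + lam * (r * (-K * ((1 - r) / (1 + r)))) := by
      rw [mul_div_assoc', mul_div_assoc', mul_div_assoc', ← sub_nonneg]
      have : r + lam * (r * (-K * (1 - r))) / (1 + r) - 1
          = (1 - r) * (-lam * K * r - 1 - r) / (1 + r) := by field_simp; ring
      rw [this]
      exact div_nonneg (mul_nonneg (by linarith) (by nlinarith)) (by linarith)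
    linarith
  · rw [div_le_iff₀ (by positivity)] at h1
    have : 0 ≤ lam * (r * ((-K - a) * ((1 - r) / (1 + r)))) :=
      mul_nonneg hlam.le (mul_nonneg hr0.le (mul_nonneg (by linarith) hs0))
    nlinarith

theorem stmt_9_general {X : Type*} [NormedAddCommGroup X] [NormedSpace ℂ X]
    (a : ℝ) (ha : 0 ≤ a) (f : X → X) (hf : IsNa a f)
    (K : ℝ) (hKdef : K = KA (fderiv ℂ f 0) Real.pi) (hK : K < 0) (hKa : K + a ≤ 0)
    (lam : ℝ) (hlam : 0 < lam) (w : X)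
    (hw1 : min (3 / (1 - lam * K)) (1 / (1 + lam * a)) ≤ ‖w‖) (hw2 : ‖w‖ < 1) :
    1 ≤ ‖w + (lam : ℂ) • f w‖ := by
  have hr : 0 < ‖w‖ :=
    (lt_min (div_pos three_pos (by nlinarith)) (div_pos one_pos (by nlinarith))).trans_le hw1
  obtain ⟨φ, hφ, hφw⟩ := exists_dual_vector ℂ w hr.ne'
  set u : X := (‖w‖ : ℂ)⁻¹ • w
  have hwu : (‖w‖ : ℂ) • u = w := smul_inv_smul₀ (by exact_mod_cast hr.ne') w
  have hu : ‖u‖ = 1 := by simp [u, norm_smul, hr.ne']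
  have hφu : φ u = 1 := by simp [u, hφw, hr.ne']
  have hAu : -K ≤ (φ (fderiv ℂ f 0 u)).re := by
    have hKA := re_exp_mul_apply_le_KA (fderiv ℂ f 0) Real.pi hu (φ := φ)
      ⟨by simp [hφu, hu], by rw [hφ, hu]⟩
    rw [neg_mul, exp_neg, exp_pi_mul_I] at hKA
    simp only [inv_neg, inv_one, neg_mul, one_mul, neg_re] at hKA
    linarith
  have hgrowth := hf.le_re_apply_smul hu hφ hφu hr.le hw2
  rw [hwu] at hgrowth
  calc (1 : ℝ) ≤ ‖w‖ + lam * (‖w‖ * (a + (-K - a) * ((1 - ‖w‖) / (1 + ‖w‖)))) :=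
        one_le_add_mul_harnack_bound ha hK hKa hlam hr hw2 hw1
    _ ≤ ‖w‖ + lam * (φ (f w)).re := by
        have hs : 0 ≤ (1 - ‖w‖) / (1 + ‖w‖) := div_nonneg (by linarith) (by linarith)
        gcongr
        refine le_trans ?_ hgrowth
        gcongr
    _ = (φ (w + (lam : ℂ) • f w)).re := by simp [hφw]
    _ ≤ ‖w + (lam : ℂ) • f w‖ :=
        (re_le_norm _).trans ((φ.le_opNorm _).trans_eq (by rw [hφ, one_mul]))

/-- Corollary 4.3: if `α(λ) ≤ ‖w‖ < 1` then `‖w + λ f(w)‖ ≥ 1`. -/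
theorem stmt_9 {X : Type*} [NormedAddCommGroup X] [NormedSpace ℂ X] [Nontrivial X]
    (a : ℝ) (ha : 0 ≤ a) (f : X → X) (hf : IsNa a f)
    (K : ℝ) (hKdef : K = KA (fderiv ℂ f 0) Real.pi) (hK : K < 0) (hKa : K + a ≤ 0)
    (lam : ℝ) (hlam : 0 < lam) (w : X)
    (hw1 : min (3 / (1 - lam * K)) (1 / (1 + lam * a)) ≤ ‖w‖) (hw2 : ‖w‖ < 1) :
    1 ≤ ‖w + (lam : ℂ) • f w‖ :=
  stmt_9_general a ha f hf K hKdef hK hKa lam hlam w hw1 hw2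
end

section
/- Let a ≥ 0, K < 0 and K₁ ≥ a be real constants. Define α(λ) := min( 3/(1 − λK), 1/(1 + λa) ) for λ > 0, and on the set D := {λ > 0 : α(λ) < 1} define Ψ(λ) := (2λ(K₁ − a)/(1 − λK)) · Σ_{n=2}^∞ n^{(2n−1)/(n−1)} · α(λ)^{n−1} (the series converges since α(λ) < 1). Then Ψ is decreasing on D (λ₁ ≤ λ₂ in D implies Ψ(λ₁) ≥ Ψ(λ₂)) and Ψ(λ) → 0 as λ → ∞. -/
open Filter Set

/-!
Write `cₘ = (m + 2) ^ ((2m + 3) / (m + 1))` for the coefficients of `Ψ`. Raising to the power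
`x (x - 1)` with `x = m + 2` and applying Bernoulli's inequality shows that `cₘ` increases, so
by Abel summation `W(x) = (1 - x) ∑ cₘ xᵐ = c₀ + ∑ (cₘ₊₁ - cₘ) xᵐ⁺¹` is nondecreasing on
`[0, 1)`. Next, `1 / α(λ) = 1 + λ β(λ)` with `β(λ) = max (-2/(3λ) - K/3) a` nondecreasing, so
`α` decreases and, wherever `α(λ) < 1`, `(1 - λK) Ψ(λ) = 2 (K₁ - a) W(α(λ)) / β(λ)` is
nonincreasing. As `1 - λK` increases, `Ψ` decreases on `D`, and `0 ≤ Ψ(λ) ≤ C / (1 - λK)` for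
large `λ` gives the limit.
-/

section AbelSummation

variable {c : ℕ → ℝ} {x : ℝ}

theorem one_sub_mul_tsum_mul_pow (hs : Summable fun m ↦ c m * x ^ m) :
    (1 - x) * ∑' m, c m * x ^ m = c 0 + ∑' m, (c (m + 1) - c m) * x ^ (m + 1) := by
  have hshift : Summable fun m ↦ c (m + 1) * x ^ (m + 1) := (summable_nat_add_iff 1).2 hs
  have hmul : Summable fun m ↦ c m * x ^ (m + 1) := (hs.mul_left x).congr fun m ↦ by ring
  have hsplit : ∑' m, c m * x ^ m = c 0 + ∑' m, c (m + 1) * x ^ (m + 1) := by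
    simpa using hs.tsum_eq_zero_add
  have hx : x * ∑' m, c m * x ^ m = ∑' m, c m * x ^ (m + 1) := by
    rw [← tsum_mul_left]; exact tsum_congr fun m ↦ by ring
  rw [sub_mul, one_mul, hx, hsplit, add_sub_assoc, ← hshift.tsum_sub hmul]
  simp only [sub_mul]

theorem monotoneOn_one_sub_mul_tsum_mul_pow (hc : Monotone c)
    (hs : ∀ x ∈ Ico (0 : ℝ) 1, Summable fun m ↦ c m * x ^ m) :
    MonotoneOn (fun x ↦ (1 - x) * ∑' m, c m * x ^ m) (Ico 0 1) := by
  have hdiff : ∀ z ∈ Ico (0 : ℝ) 1, Summable fun m ↦ (c (m + 1) - c m) * z ^ (m + 1) :=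
    fun z hz ↦ (((summable_nat_add_iff 1).2 (hs z hz)).sub ((hs z hz).mul_left z)).congr
      fun m ↦ by ring
  intro x hx y hy hxy
  simp only [one_sub_mul_tsum_mul_pow (hs x hx), one_sub_mul_tsum_mul_pow (hs y hy)]
  gcongr 1
  refine (hdiff x hx).tsum_le_tsum (fun m ↦ ?_) (hdiff y hy)
  exact mul_le_mul_of_nonneg_left (pow_le_pow_left₀ hx.1 hxy _) (sub_nonneg.2 (hc m.le_succ))

end AbelSummation

theorem pow_succ_le_add_one_pow {x : ℝ} (hx : 0 < x) {N : ℕ} (hN : x * (x - 1) ≤ N) :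
    x ^ (N + 1) ≤ (x + 1) ^ N := by
  have hxN : x ≤ 1 + N * (1 / x) := by
    rw [mul_one_div, ← sub_le_iff_le_add', le_div_iff₀ hx]; linarith
  calc x ^ (N + 1) = x ^ N * x := pow_succ _ _
    _ ≤ x ^ N * (1 + N * (1 / x)) := by gcongr
    _ ≤ x ^ N * (1 + 1 / x) ^ N := by
      gcongr; exact one_add_mul_le_pow (by linarith [one_div_pos.2 hx]) N
    _ = (x + 1) ^ N := by rw [← mul_pow, mul_add, mul_one, mul_one_div_cancel hx.ne']

/-- The coefficient `n ^ ((2n - 1) / (n - 1))` of `Ψ`, indexed by `m = n - 2`. -/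
noncomputable def psiCoeff (m : ℕ) : ℝ :=
  ((m : ℝ) + 2) ^ ((2 * ((m : ℝ) + 2) - 1) / (((m : ℝ) + 2) - 1))

theorem psiCoeff_nonneg (m : ℕ) : 0 ≤ psiCoeff m := by
  unfold psiCoeff; positivity

theorem psiCoeff_le_cube (m : ℕ) : psiCoeff m ≤ ((m : ℝ) + 2) ^ 3 := by
  have hm : (0 : ℝ) ≤ m := m.cast_nonneg
  rw [psiCoeff, ← Real.rpow_natCast]
  refine Real.rpow_le_rpow_of_exponent_le (by linarith) ?_
  rw [div_le_iff₀ (by linarith)]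
  push_cast
  linarith

theorem psiCoeff_monotone : Monotone psiCoeff := by
  refine monotone_nat_of_le_succ fun m ↦ ?_
  obtain ⟨x, hx⟩ : ∃ x : ℝ, x = m + 2 := ⟨_, rfl⟩
  have hx2 : 2 ≤ x := by rw [hx]; linarith [m.cast_nonneg (α := ℝ)]
  have hx0 : x ≠ 0 := by positivity
  have hx1 : x - 1 ≠ 0 := by linarith
  -- raised to the power `x (x - 1)`, the coefficients become `x ^ (N + 1)` and `(x + 1) ^ N`
  set N : ℕ := 2 * m ^ 2 + 7 * m + 5
  have hN : (N : ℝ) = (2 * x + 1) * (x - 1) := by simp only [N, hx]; push_cast; ring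
  have e₁ : psiCoeff m = (x ^ (N + 1)) ^ (1 / (x * (x - 1))) := by
    rw [psiCoeff, ← hx, ← Real.rpow_natCast, ← Real.rpow_mul (by positivity)]
    congr 1
    push_cast
    rw [hN]
    field_simp
    ring
  have e₂ : psiCoeff (m + 1) = ((x + 1) ^ N) ^ (1 / (x * (x - 1))) := by
    have : ((m + 1 : ℕ) : ℝ) + 2 = x + 1 := by rw [hx]; push_cast; ring
    rw [psiCoeff, this, ← Real.rpow_natCast, ← Real.rpow_mul (by positivity), hN,
      add_sub_cancel_right]
    congr 1
    field_simp
    ring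
  rw [e₁, e₂]
  exact Real.rpow_le_rpow (by positivity)
    (pow_succ_le_add_one_pow (by linarith) (by rw [hN]; nlinarith))
    (one_div_pos.2 (by nlinarith)).le

theorem summable_psiCoeff_mul_pow {x : ℝ} (hx : |x| < 1) :
    Summable fun m ↦ psiCoeff m * x ^ m := by
  refine .of_norm_bounded_eventually_nat
    ((summable_pow_mul_geometric_of_norm_lt_one 3 (r := |x|) (by simpa using hx)).mul_left 27) ?_
  filter_upwards [eventually_ge_atTop 1] with m hm
  have hm : (1 : ℝ) ≤ m := by exact_mod_cast hm
  have hcube : psiCoeff m ≤ 27 * (m : ℝ) ^ 3 :=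
    calc psiCoeff m ≤ ((m : ℝ) + 2) ^ 3 := psiCoeff_le_cube m
      _ ≤ (3 * m) ^ 3 := by gcongr; linarith
      _ = 27 * (m : ℝ) ^ 3 := by ring
  rw [norm_mul, norm_pow, Real.norm_of_nonneg (psiCoeff_nonneg m), Real.norm_eq_abs,
    ← mul_assoc]
  exact mul_le_mul_of_nonneg_right hcube (by positivity)

section Psi

variable (a K K₁ : ℝ)

noncomputable def alpha (lam : ℝ) : ℝ := min (3 / (1 - lam * K)) (1 / (1 + lam * a))

noncomputable def psi (lam : ℝ) : ℝ :=
  2 * lam * (K₁ - a) / (1 - lam * K) * ∑' m, psiCoeff m * alpha a K lam ^ (m + 1)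

noncomputable def beta (lam : ℝ) : ℝ := max (-(2 / (3 * lam)) - K / 3) a

variable {a K K₁} {lam lam₁ lam₂ : ℝ}

theorem alpha_pos (ha : 0 ≤ a) (hK : K ≤ 0) (hl : 0 ≤ lam) : 0 < alpha a K lam := by
  have : 0 ≤ lam * a := mul_nonneg hl ha
  have : lam * K ≤ 0 := mul_nonpos_of_nonneg_of_nonpos hl hK
  exact lt_min (by apply div_pos <;> linarith) (by apply div_pos <;> linarith)

theorem alpha_eq (ha : 0 ≤ a) (hK : K ≤ 0) (hl : 0 < lam) :
    alpha a K lam = 1 / (1 + lam * beta a K lam) := by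
  have hu : 0 < 1 - lam * K := by nlinarith
  have hv : 0 < 1 + lam * a := by nlinarith
  have hmax : 1 + lam * beta a K lam = max ((1 - lam * K) / 3) (1 + lam * a) := by
    rw [beta, mul_max_of_nonneg _ _ hl.le, ← max_add_add_left]
    congr 1
    field_simp
    ring
  rw [alpha, hmax, ← one_div_div (1 - lam * K) 3]
  rcases le_total ((1 - lam * K) / 3) (1 + lam * a) with h | h
  · rw [max_eq_right h, min_eq_right (one_div_le_one_div_of_le (by linarith) h)]
  · rw [max_eq_left h, min_eq_left (one_div_le_one_div_of_le hv h)]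

theorem le_beta : a ≤ beta a K lam := le_max_right _ _

theorem beta_mono (hl₁ : 0 < lam₁) (h12 : lam₁ ≤ lam₂) : beta a K lam₁ ≤ beta a K lam₂ := by
  unfold beta
  gcongr

theorem beta_pos (ha : 0 ≤ a) (hK : K ≤ 0) (hl : 0 < lam) (hα : alpha a K lam < 1) :
    0 < beta a K lam := by
  have : 0 ≤ lam * beta a K lam := mul_nonneg hl.le (ha.trans le_beta)
  rw [alpha_eq ha hK hl, div_lt_one (by linarith)] at hα
  exact pos_of_mul_pos_right (by linarith) hl.le

theorem alpha_anti (ha : 0 ≤ a) (hK : K ≤ 0) (hl₁ : 0 < lam₁) (h12 : lam₁ ≤ lam₂) :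
    alpha a K lam₂ ≤ alpha a K lam₁ := by
  have hl₂ : 0 < lam₂ := hl₁.trans_le h12
  have hβ₁ : 0 ≤ beta a K lam₁ := ha.trans le_beta
  rw [alpha_eq ha hK hl₁, alpha_eq ha hK hl₂]
  exact one_div_le_one_div_of_le (by positivity)
    (add_le_add_right (mul_le_mul h12 (beta_mono hl₁ h12) hβ₁ hl₂.le) 1)

theorem exists_alpha_lt_one (hK : K < 0) : ∃ lam, 0 < lam ∧ alpha a K lam < 1 := by
  refine ⟨-3 / K, div_pos_of_neg_of_neg (by norm_num) hK, (min_le_left _ _).trans_lt ?_⟩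
  rw [show 1 - -3 / K * K = 4 by field_simp [hK.ne]; ring]
  norm_num

theorem psi_nonneg (ha : 0 ≤ a) (hK : K ≤ 0) (hK₁ : a ≤ K₁) (hl : 0 ≤ lam) :
    0 ≤ psi a K K₁ lam := by
  have hu : 0 ≤ 1 - lam * K := by nlinarith
  have hα := (alpha_pos ha hK hl).le
  refine mul_nonneg (div_nonneg (mul_nonneg (by positivity) (sub_nonneg.2 hK₁)) hu) ?_
  exact tsum_nonneg fun m ↦ mul_nonneg (psiCoeff_nonneg m) (pow_nonneg hα _)

theorem one_sub_mul_psi (ha : 0 ≤ a) (hK : K ≤ 0) (hl : 0 < lam) (hα : alpha a K lam < 1) :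
    (1 - lam * K) * psi a K K₁ lam =
      2 * (K₁ - a) * ((1 - alpha a K lam) * ∑' m, psiCoeff m * alpha a K lam ^ m)
        / beta a K lam := by
  have hβ := beta_pos ha hK hl hα
  have hu : 1 - lam * K ≠ 0 := by nlinarith
  have hshift : ∑' m, psiCoeff m * alpha a K lam ^ (m + 1)
      = alpha a K lam * ∑' m, psiCoeff m * alpha a K lam ^ m := by
    rw [← tsum_mul_left]; exact tsum_congr fun m ↦ by ring
  rw [psi, hshift]
  generalize ∑' m, psiCoeff m * alpha a K lam ^ m = S
  rw [alpha_eq ha hK hl]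
  have : 1 + lam * beta a K lam ≠ 0 := by positivity
  field_simp
  ring

theorem antitoneOn_one_sub_mul_psi (ha : 0 ≤ a) (hK : K ≤ 0) (hK₁ : a ≤ K₁) :
    AntitoneOn (fun lam ↦ (1 - lam * K) * psi a K K₁ lam)
      {lam | 0 < lam ∧ alpha a K lam < 1} := by
  rintro lam₁ ⟨hl₁, hα₁⟩ lam₂ ⟨hl₂, hα₂⟩ h12
  have hmem : ∀ l, 0 < l → alpha a K l < 1 → alpha a K l ∈ Ico (0 : ℝ) 1 :=
    fun l hl h ↦ ⟨(alpha_pos ha hK hl.le).le, h⟩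
  have hW := monotoneOn_one_sub_mul_tsum_mul_pow psiCoeff_monotone
    (fun x hx ↦ summable_psiCoeff_mul_pow (abs_lt.2 ⟨by linarith [hx.1], hx.2⟩))
    (hmem _ hl₂ hα₂) (hmem _ hl₁ hα₁) (alpha_anti ha hK hl₁ h12)
  have hW₂ : 0 ≤ (1 - alpha a K lam₂) * ∑' m, psiCoeff m * alpha a K lam₂ ^ m :=
    mul_nonneg (by linarith) (tsum_nonneg fun m ↦
      mul_nonneg (psiCoeff_nonneg m) (pow_nonneg (alpha_pos ha hK hl₂.le).le m))
  have hK₁a : 0 ≤ 2 * (K₁ - a) := by linarith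
  simp only [one_sub_mul_psi ha hK hl₁ hα₁, one_sub_mul_psi ha hK hl₂ hα₂]
  exact div_le_div₀ (mul_nonneg hK₁a (hW₂.trans hW)) (by gcongr) (beta_pos ha hK hl₁ hα₁)
    (beta_mono hl₁ h12)

end Psi

/-- Lemma 5.2: the auxiliary function
`Ψ(λ) = (2λ(K₁-a)/(1-λK)) · Σ_{n≥2} n^{(2n-1)/(n-1)} α(λ)^{n-1}`
is decreasing on `{λ > 0 : α(λ) < 1}` and tends to `0` as `λ → ∞`. -/
theorem stmt_14 (a K K₁ : ℝ) (ha : 0 ≤ a) (hK : K < 0) (hK₁ : a ≤ K₁)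
    (α Ψ : ℝ → ℝ)
    (hα : ∀ lam : ℝ, α lam = min (3 / (1 - lam * K)) (1 / (1 + lam * a)))
    (hΨ : ∀ lam : ℝ, Ψ lam = (2 * lam * (K₁ - a) / (1 - lam * K)) *
      ∑' m : ℕ, ((m : ℝ) + 2) ^ ((2 * ((m : ℝ) + 2) - 1) / (((m : ℝ) + 2) - 1)) *
        (α lam) ^ (m + 1)) :
    (∀ lam₁ : ℝ, 0 < lam₁ → α lam₁ < 1 → ∀ lam₂ : ℝ, 0 < lam₂ → α lam₂ < 1 →
      lam₁ ≤ lam₂ → Ψ lam₂ ≤ Ψ lam₁) ∧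
    Tendsto Ψ atTop (nhds 0) := by
  obtain rfl : α = alpha a K := funext hα
  obtain rfl : Ψ = psi a K K₁ := funext hΨ
  have hanti := antitoneOn_one_sub_mul_psi ha hK.le hK₁
  have hu : ∀ lam : ℝ, 0 ≤ lam → 0 < 1 - lam * K := fun lam hl ↦ by nlinarith
  refine ⟨fun lam₁ hl₁ hα₁ lam₂ hl₂ hα₂ h12 ↦ ?_, ?_⟩
  · refine le_of_mul_le_mul_left ((hanti ⟨hl₁, hα₁⟩ ⟨hl₂, hα₂⟩ h12).trans ?_)
      (hu lam₂ hl₂.le)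
    exact mul_le_mul_of_nonneg_right (by nlinarith) (psi_nonneg ha hK.le hK₁ hl₁.le)
  · obtain ⟨lam₀, hl₀, hα₀⟩ := exists_alpha_lt_one (a := a) hK
    have hlim : Tendsto (fun lam ↦ 1 - lam * K) atTop atTop := by
      simpa [sub_eq_add_neg, ← mul_neg] using
        tendsto_atTop_add_const_left atTop 1 (tendsto_id.atTop_mul_const (neg_pos.2 hK))
    refine tendsto_of_tendsto_of_tendsto_of_le_of_le' tendsto_const_nhds
      (tendsto_const_nhds (x := (1 - lam₀ * K) * psi a K K₁ lam₀).div_atTop hlim) ?_ ?_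
    · filter_upwards [eventually_ge_atTop 0] with lam hl using psi_nonneg ha hK.le hK₁ hl
    · filter_upwards [eventually_ge_atTop lam₀] with lam hl
      have hl' : 0 < lam := hl₀.trans_le hl
      rw [le_div_iff₀ (hu lam hl'.le), mul_comm]
      exact hanti ⟨hl₀, hα₀⟩ ⟨hl', (alpha_anti ha hK.le hl₀ hl).trans_lt hα₀⟩ hl
end
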